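/- Monotonicity of ARE solutions: if P₁ and P₂ are the stabilizing positive semidefinite solutions of A^T P + P A − P B B^T P = −Q₁ and A^T P + P A − P B B^T P = −Q₂ respectively, with Q₁ ⪰ Q₂ ⪰ 0 and both A − B B^T P₁ and A − B B^T P₂ Hurwitz, then P₁ ⪰ P₂. -/

import Mathlib

open Matrix

def IsHurwitz {n : ℕ} (M : Matrix (Fin n) (Fin n) ℝ) : Prop :=
  ∀ μ ∈ spectrum ℂ (M.map (Complex.ofReal)), μ.re < 0

/-!
Put `X = P₁ - P₂` and `M = A - B Bᵀ P₁`. Subtracting the two Riccati equations gives the Lyapunov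
equation `Mᵀ X + X M = -R` with `R = (Q₁ - Q₂) + X B Bᵀ X ⪰ 0`. Along a trajectory
`x(t) = exp (t M) v` the quadratic form `xᵀ X x` has derivative `-xᵀ R x ≤ 0`, and `x(t) → 0`
because `M` is Hurwitz: on a generalized eigenspace for `μ`, `exp (t M) v` is `exp (t μ)` times a
polynomial in `t`. Hence `vᵀ X v ≥ lim xᵀ X x = 0`.
-/

open NormedSpace Filter Topology
open scoped Nat

-- `exp` does not depend on the norm; this one only makes the Banach-algebra lemmas available.
attribute [local instance] Matrix.linftyOpNormedRing Matrix.linftyOpNormedAlgebra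

variable {ι : Type*} [Fintype ι]

theorem Complex.tendsto_exp_mul_mul_pow_atTop {μ : ℂ} (hμ : μ.re < 0) (j : ℕ) :
    Tendsto (fun t : ℝ => Complex.exp (t * μ) * (t : ℂ) ^ j) atTop (𝓝 0) := by
  rw [tendsto_zero_iff_norm_tendsto_zero]
  refine (tendsto_rpow_mul_exp_neg_mul_atTop_nhds_zero j (-μ.re) (neg_pos.2 hμ)).congr' ?_
  filter_upwards [eventually_ge_atTop 0] with t ht
  simp [Complex.norm_exp, abs_of_nonneg ht, mul_comm]

theorem HasDerivAt.dotProduct {u w : ℝ → ι → ℝ} {u' w' : ι → ℝ} {t : ℝ}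
    (hu : HasDerivAt u u' t) (hw : HasDerivAt w w' t) :
    HasDerivAt (fun s => u s ⬝ᵥ w s) (u' ⬝ᵥ w t + u t ⬝ᵥ w') t :=
  (HasDerivAt.fun_sum fun i _ => (hasDerivAt_pi.1 hu i).mul (hasDerivAt_pi.1 hw i)).congr_deriv
    Finset.sum_add_distrib

theorem HasDerivAt.mulVec {w : ℝ → ι → ℝ} {w' : ι → ℝ} {t : ℝ} (X : Matrix ι ι ℝ)
    (hw : HasDerivAt w w' t) :
    HasDerivAt (fun s => X *ᵥ w s) (X *ᵥ w') t :=
  (mulVecLin X).toContinuousLinearMap.hasFDerivAt.comp_hasDerivAt t hw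

section

variable [DecidableEq ι]

namespace Matrix

theorem exp_mulVec_eq_sum_of_pow_mulVec_eq_zero {𝕂 : Type*} [RCLike 𝕂] {N : Matrix ι ι 𝕂}
    {v : ι → 𝕂} {k : ℕ} (h : N ^ k *ᵥ v = 0) :
    exp N *ᵥ v = ∑ j ∈ Finset.range k, (j ! : 𝕂)⁻¹ • (N ^ j *ᵥ v) := by
  have hsum := (exp_series_hasSum_exp' (𝕂 := 𝕂) N).map (mulVec.addMonoidHomLeft v)
    (continuous_id.matrix_mulVec continuous_const)
  have hzero : ∀ j ∉ Finset.range k, ((j ! : 𝕂)⁻¹ • N ^ j) *ᵥ v = 0 := by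
    intro j hj
    rw [Finset.mem_range, not_lt] at hj
    rw [smul_mulVec, ← Nat.sub_add_cancel hj, pow_add, ← mulVec_mulVec, h, mulVec_zero, smul_zero]
  have hexp := hsum.unique (hasSum_sum_of_ne_finset_zero hzero)
  simp only [mulVec.addMonoidHomLeft, AddMonoidHom.coe_mk, ZeroHom.coe_mk,
    Function.comp_def] at hexp
  exact hexp.trans (Finset.sum_congr rfl fun j _ => smul_mulVec _ _ _)

theorem exp_smul_eq_cexp_smul_exp_smul_sub (M : Matrix ι ι ℂ) (μ t : ℂ) :
    exp (t • M) = Complex.exp (t * μ) • exp (t • (M - μ • 1)) := by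
  have hc : Commute ((t * μ) • (1 : Matrix ι ι ℂ)) (t • (M - μ • 1)) :=
    ((Commute.one_left _).smul_left _).smul_right _
  have hsplit : t • M = (t * μ) • (1 : Matrix ι ι ℂ) + t • (M - μ • 1) := by
    rw [smul_sub, smul_smul]; abel
  rw [hsplit, exp_add_of_commute _ _ hc, smul_one_eq_diagonal, exp_diagonal, Pi.exp_def,
    ← smul_one_eq_diagonal, smul_one_mul, Complex.exp_eq_exp_ℂ]

theorem tendsto_exp_smul_mulVec_of_mem_maxGenEigenspace {M : Matrix ι ι ℂ} {μ : ℂ}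
    (hμ : μ.re < 0) {w : ι → ℂ} (hw : w ∈ Module.End.maxGenEigenspace (toLin' M) μ) :
    Tendsto (fun t : ℝ => exp ((t : ℂ) • M) *ᵥ w) atTop (𝓝 0) := by
  obtain ⟨k, hk⟩ := (Module.End.mem_maxGenEigenspace _ _ _).1 hw
  replace hk : (M - μ • 1) ^ k *ᵥ w = 0 := by
    rw [← toLinAlgEquiv'_apply, map_pow, map_sub, map_smul, map_one]
    exact hk
  have hexp (t : ℝ) : exp ((t : ℂ) • M) *ᵥ w = ∑ j ∈ Finset.range k,
      (Complex.exp (t * μ) * (t : ℂ) ^ j) • ((j ! : ℂ)⁻¹ • ((M - μ • 1) ^ j *ᵥ w)) := by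
    rw [exp_smul_eq_cexp_smul_exp_smul_sub M μ, smul_mulVec,
      exp_mulVec_eq_sum_of_pow_mulVec_eq_zero (by rw [smul_pow, smul_mulVec, hk, smul_zero]),
      Finset.smul_sum]
    refine Finset.sum_congr rfl fun j _ => ?_
    simp only [smul_pow, smul_mulVec, smul_smul]
    ring_nf
  simp only [hexp]
  simpa using tendsto_finsetSum (Finset.range k) fun j _ =>
    (Complex.tendsto_exp_mul_mul_pow_atTop hμ j).smul_const ((j ! : ℂ)⁻¹ • ((M - μ • 1) ^ j *ᵥ w))

theorem tendsto_exp_smul_mulVec_of_forall_re_neg {M : Matrix ι ι ℂ}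
    (hM : ∀ μ ∈ spectrum ℂ M, μ.re < 0) (v : ι → ℂ) :
    Tendsto (fun t : ℝ => exp ((t : ℂ) • M) *ᵥ v) atTop (𝓝 0) := by
  have hv : v ∈ ⨆ μ, Module.End.maxGenEigenspace (toLin' M) μ := by
    rw [Module.End.iSup_maxGenEigenspace_eq_top]; trivial
  refine Submodule.iSup_induction _
    (motive := fun v => Tendsto (fun t : ℝ => exp ((t : ℂ) • M) *ᵥ v) atTop (𝓝 0)) hv
    (fun μ w hw => ?_) (by simp) fun x y hx hy => by simpa [mulVec_add] using hx.add hy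
  rcases eq_or_ne w 0 with rfl | hw0
  · simp
  have hμ : μ ∈ spectrum ℂ M := by
    rw [← spectrum_toLin']
    exact (Module.End.HasUnifEigenvalue.lt zero_lt_one
      ((Submodule.ne_bot_iff _).2 ⟨w, hw, hw0⟩)).mem_spectrum
  exact tendsto_exp_smul_mulVec_of_mem_maxGenEigenspace (hM μ hμ) hw

theorem map_ofReal_exp_smul (M : Matrix ι ι ℝ) (t : ℝ) :
    (exp (t • M)).map Complex.ofReal = exp ((t : ℂ) • M.map Complex.ofReal) := by
  have hsmul : Complex.ofRealHom.mapMatrix (t • M) = (t : ℂ) • M.map Complex.ofReal := by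
    ext i j; simp
  calc (exp (t • M)).map Complex.ofReal = Complex.ofRealHom.mapMatrix (exp (t • M)) := rfl
    _ = exp ((t : ℂ) • M.map Complex.ofReal) := by
      rw [← hsmul]; exact map_exp _ (continuous_id.matrix_map Complex.continuous_ofReal) _

theorem hasDerivAt_exp_smul_mulVec (M : Matrix ι ι ℝ) (v : ι → ℝ) (t : ℝ) :
    HasDerivAt (fun s : ℝ => exp (s • M) *ᵥ v) (M *ᵥ (exp (t • M) *ᵥ v)) t := by
  rw [mulVec_mulVec]
  exact (mulVec.addMonoidHomLeft v).toRealLinearMap (continuous_id.matrix_mulVec continuous_const)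
    |>.hasFDerivAt.comp_hasDerivAt t (hasDerivAt_exp_smul_const' (𝕂 := ℝ) M t)

theorem hasDerivAt_dotProduct_mulVec_exp_smul_mulVec {M X R : Matrix ι ι ℝ}
    (h : Mᵀ * X + X * M = -R) (v : ι → ℝ) (t : ℝ) :
    HasDerivAt (fun s => (exp (s • M) *ᵥ v) ⬝ᵥ X *ᵥ (exp (s • M) *ᵥ v))
      (-((exp (t • M) *ᵥ v) ⬝ᵥ R *ᵥ (exp (t • M) *ᵥ v))) t := by
  have hx := hasDerivAt_exp_smul_mulVec M v t
  convert hx.dotProduct (hx.mulVec X) using 1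
  rw [← dotProduct_neg, ← neg_mulVec, ← h, add_mulVec, dotProduct_add, ← mulVec_mulVec,
    ← mulVec_mulVec, dotProduct_mulVec _ Mᵀ, vecMul_transpose]

end Matrix

end

theorem Matrix.lyapunov_closedLoop_sub_eq_riccati_sub {α κ : Type*} [CommRing α] [Fintype κ]
    {A P₁ P₂ : Matrix ι ι α} (B : Matrix ι κ α) (hP₁ : P₁ᵀ = P₁) :
    (A - B * Bᵀ * P₁)ᵀ * (P₁ - P₂) + (P₁ - P₂) * (A - B * Bᵀ * P₁) =
      (Aᵀ * P₁ + P₁ * A - P₁ * B * Bᵀ * P₁) - (Aᵀ * P₂ + P₂ * A - P₂ * B * Bᵀ * P₂)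
        - (P₁ - P₂) * (B * Bᵀ) * (P₁ - P₂) := by
  simp only [transpose_sub, transpose_mul, transpose_transpose, hP₁, sub_mul, mul_sub,
    Matrix.mul_assoc]
  abel

namespace IsHurwitz

variable {n : ℕ} {M : Matrix (Fin n) (Fin n) ℝ}

theorem tendsto_exp_smul_mulVec (hM : IsHurwitz M) (v : Fin n → ℝ) :
    Tendsto (fun t : ℝ => exp (t • M) *ᵥ v) atTop (𝓝 0) := by
  have h := tendsto_exp_smul_mulVec_of_forall_re_neg hM (fun j => (v j : ℂ))
  rw [tendsto_pi_nhds] at h ⊢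
  intro i
  have hcoe (t : ℝ) : (exp ((t : ℂ) • M.map Complex.ofReal) *ᵥ fun j => (v j : ℂ)) i
      = ((exp (t • M) *ᵥ v) i : ℂ) := by
    rw [← map_ofReal_exp_smul]; exact (RingHom.map_mulVec Complex.ofRealHom _ _ i).symm
  have hre := (Complex.continuous_re.tendsto _).comp (h i)
  simpa only [Function.comp_def, hcoe, Complex.ofReal_re, Pi.zero_apply, Complex.zero_re] using hre

theorem posSemidef_of_lyapunov {X R : Matrix (Fin n) (Fin n) ℝ} (hM : IsHurwitz M)
    (hX : X.IsHermitian) (hR : R.PosSemidef) (h : Mᵀ * X + X * M = -R) : X.PosSemidef := by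
  refine .of_dotProduct_mulVec_nonneg hX fun v => ?_
  have hanti := antitone_of_hasDerivAt_nonpos (hasDerivAt_dotProduct_mulVec_exp_smul_mulVec h v)
    fun t => neg_nonpos.2 (by simpa using hR.dotProduct_mulVec_nonneg (exp (t • M) *ᵥ v))
  have hlim : Tendsto (fun s => (exp (s • M) *ᵥ v) ⬝ᵥ X *ᵥ (exp (s • M) *ᵥ v)) atTop (𝓝 0) :=
    ((continuous_id.dotProduct (continuous_const.matrix_mulVec continuous_id)).tendsto' 0 0
      (by simp)).comp (hM.tendsto_exp_smul_mulVec v)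
  simpa using hanti.le_of_tendsto hlim 0

end IsHurwitz

theorem riccati_solution_monotone_general
    {n m : ℕ} (A : Matrix (Fin n) (Fin n) ℝ) (B : Matrix (Fin n) (Fin m) ℝ)
    (P₁ P₂ Q₁ Q₂ : Matrix (Fin n) (Fin n) ℝ)
    (hP₁ : P₁.PosSemidef) (hP₂ : P₂.PosSemidef)
    (hQ : (Q₁ - Q₂).PosSemidef)
    (hARE₁ : Aᵀ * P₁ + P₁ * A - P₁ * B * Bᵀ * P₁ = -Q₁)
    (hARE₂ : Aᵀ * P₂ + P₂ * A - P₂ * B * Bᵀ * P₂ = -Q₂)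
    (hHur₁ : IsHurwitz (A - B * Bᵀ * P₁)) :
    (P₁ - P₂).PosSemidef := by
  have hX : (P₁ - P₂).IsHermitian := hP₁.1.sub hP₂.1
  have hR : ((Q₁ - Q₂) + (P₁ - P₂) * (B * Bᵀ) * (P₁ - P₂)).PosSemidef := by
    refine hQ.add ?_
    have hBB := (posSemidef_self_mul_conjTranspose B).conjTranspose_mul_mul_same (P₁ - P₂)
    rwa [hX.eq, conjTranspose_eq_transpose_of_trivial] at hBB
  refine hHur₁.posSemidef_of_lyapunov hX hR ?_
  rw [lyapunov_closedLoop_sub_eq_riccati_sub B (isHermitian_iff_isSymm.1 hP₁.1).eq, hARE₁, hARE₂]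
  abel

theorem riccati_solution_monotone
    {n m : ℕ} (A : Matrix (Fin n) (Fin n) ℝ) (B : Matrix (Fin n) (Fin m) ℝ)
    (P₁ P₂ Q₁ Q₂ : Matrix (Fin n) (Fin n) ℝ)
    (hP₁ : P₁.PosSemidef) (hP₂ : P₂.PosSemidef)
    (hQ₂ : Q₂.PosSemidef) (hQ : (Q₁ - Q₂).PosSemidef)
    (hARE₁ : Aᵀ * P₁ + P₁ * A - P₁ * B * Bᵀ * P₁ = -Q₁)
    (hARE₂ : Aᵀ * P₂ + P₂ * A - P₂ * B * Bᵀ * P₂ = -Q₂)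
    (hHur₁ : IsHurwitz (A - B * Bᵀ * P₁))
    (hHur₂ : IsHurwitz (A - B * Bᵀ * P₂)) :
    (P₁ - P₂).PosSemidef :=
  riccati_solution_monotone_general A B P₁ P₂ Q₁ Q₂ hP₁ hP₂ hQ hARE₁ hARE₂ hHur₁
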